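/- Let λ > 0, p > 1, and set t = (2λ)^{1/(p-1)}. For any positive function u and positive weight φ with ∫ uᵖ φ = λ ∫ u φ and ∫ φ = 1 (integrals over a measure space), one has ∫ uᵖ φ ≤ (2λ)^{1+1/(p-1)}. In particular if p ≥ p₀ > 1 then ∫ uᵖ φ ≤ max{1, (2λ)^{1+1/(p₀-1)}}. -/
import Mathlib


open MeasureTheory

theorem abstract_integral_bound {X : Type*} [MeasurableSpace X] (μ : Measure X)
    (lam p p₀ : ℝ) (hlam : 0 < lam) (hp₀ : 1 < p₀) (hp : p₀ ≤ p)
    (u φ : X → ℝ)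
    (hu : ∀ x, 0 < u x) (hφ : ∀ x, 0 < φ x)
    (hInt1 : Integrable (fun x => u x ^ p * φ x) μ)
    (hInt2 : Integrable (fun x => u x * φ x) μ)
    (hInt3 : Integrable φ μ)
    (hnorm : ∫ x, φ x ∂μ = 1)
    (hident : ∫ x, u x ^ p * φ x ∂μ = lam * ∫ x, u x * φ x ∂μ) :
    (∫ x, u x ^ p * φ x ∂μ) ≤ (2 * lam) ^ (1 + 1 / (p - 1)) ∧
      (∫ x, u x ^ p * φ x ∂μ) ≤ max 1 ((2 * lam) ^ (1 + 1 / (p₀ - 1))) := by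
  have hp1 : 1 < p := lt_of_lt_of_le hp₀ hp
  have hpm : 0 < p - 1 := by linarith
  have h2lam : (0:ℝ) < 2 * lam := by linarith
  set t : ℝ := (2 * lam) ^ (1 / (p - 1)) with ht
  have htpos : 0 < t := Real.rpow_pos_of_pos h2lam _
  have htp : t ^ (p - 1) = 2 * lam := by
    rw [ht, ← Real.rpow_mul h2lam.le, one_div_mul_cancel hpm.ne', Real.rpow_one]
  have key : ∀ x, lam * (u x * φ x) ≤ lam * t * φ x + u x ^ p * φ x / 2 := by
    intro x
    rcases le_or_gt (u x) t with h | h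
    · have h1 : lam * (u x * φ x) ≤ lam * t * φ x := by
        rw [mul_assoc]
        exact mul_le_mul_of_nonneg_left
          (mul_le_mul_of_nonneg_right h (hφ x).le) hlam.le
      have h2 : 0 ≤ u x ^ p * φ x / 2 :=
        div_nonneg (mul_nonneg (Real.rpow_nonneg (hu x).le _) (hφ x).le) (by norm_num)
      linarith
    · have hup : 2 * lam * u x ≤ u x ^ p := by
        have h1 : t ^ (p-1) ≤ u x ^ (p-1) :=
          Real.rpow_le_rpow htpos.le h.le hpm.le
        rw [htp] at h1
        calc 2 * lam * u x ≤ u x ^ (p-1) * u x := by nlinarith [hu x]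
          _ = u x ^ p := by rw [← Real.rpow_add_one (hu x).ne', sub_add_cancel]
      have h2 : 0 ≤ lam * t * φ x :=
        mul_nonneg (mul_nonneg hlam.le htpos.le) (hφ x).le
      nlinarith [(hφ x).le]
  have hIntL : Integrable (fun x => lam * (u x * φ x)) μ := hInt2.const_mul lam
  have hIntR : Integrable (fun x => lam * t * φ x + u x ^ p * φ x / 2) μ :=
    (hInt3.const_mul (lam * t)).add (hInt1.div_const 2)
  have hmono := integral_mono hIntL hIntR key
  rw [integral_const_mul, integral_add (hInt3.const_mul (lam * t)) (hInt1.div_const 2),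
    integral_const_mul, integral_div, hnorm, mul_one] at hmono
  set I := ∫ x, u x ^ p * φ x ∂μ
  have hI : I ≤ 2 * lam * t := by rw [hident]; linarith
  have hb1 : I ≤ (2 * lam) ^ (1 + 1 / (p - 1)) := by
    rwa [Real.rpow_add h2lam, Real.rpow_one]
  refine ⟨hb1, ?_⟩
  rcases le_or_gt (2 * lam) 1 with hle | hgt
  · have : (2 * lam) ^ (1 + 1 / (p - 1)) ≤ 1 :=
      Real.rpow_le_one h2lam.le hle (by positivity)
    exact le_max_of_le_left (hb1.trans this)
  · have hexp : 1 + 1 / (p - 1) ≤ 1 + 1 / (p₀ - 1) := by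
      have : 1 / (p - 1) ≤ 1 / (p₀ - 1) :=
        one_div_le_one_div_of_le (by linarith) (by linarith)
      linarith
    exact le_max_of_le_right (hb1.trans
      (Real.rpow_le_rpow_of_exponent_le hgt.le hexp))
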